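/- For n ≥ 2, r ≥ 1 and every 1 ≤ t ≤ n^r: b(t) = N_r(2^r − N*(t)), where b(t) is the maximum of |B(F)| over all F ⊆ [n]^r with |F| = t, and N*(t) is the unique q with N_r(q−1) < t ≤ N_r(q). -/

import Mathlib

/-- Whether the `j`-th coordinate of the edge `e` equals the distinguished vertex
(the first vertex of its side, representing `v_{j+1} = 1`). -/
def vcond {n r : ℕ} (e : Fin r → Fin n) (j : ℕ) : Bool :=
  if h : j < r then decide ((e ⟨j, h⟩ : ℕ) = 0) else false

/-- The nested condition `v_{j+1} ∈ e σ₁ (v_{j+2} ∈ e σ₂ (⋯))` determined by a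
sequence `σ` over `{∧, ∨}` (where `false` encodes `∧` and `true` encodes `∨`). -/
def edgeCond {n r : ℕ} (e : Fin r → Fin n) : ℕ → List Bool → Bool
  | j, [] => vcond e j
  | j, false :: s => vcond e j && edgeCond e (j + 1) s
  | j, true :: s => vcond e j || edgeCond e (j + 1) s

/-- `F_r(σ)`: the set of edges of `[n]^r` satisfying the nested condition given by `σ`. -/
def Fset (n r : ℕ) (σ : List Bool) : Finset (Fin r → Fin n) :=
  Finset.univ.filter (fun e => edgeCond e 0 σ = true)

/-- `f_r(σ) = |F_r(σ)|`. -/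
def fval (n r : ℕ) (σ : List Bool) : ℕ := (Fset n r σ).card

/-- `Ψ_r`: the sequences over `{∧, ∨}` of length at most `r - 1`. -/
def PsiSet (r : ℕ) : Finset (List Bool) :=
  (Finset.range r).biUnion (fun m => (Finset.univ : Finset (Fin m → Bool)).image List.ofFn)

/-- The set of values `{f_r(σ) : σ ∈ Σ_r}`, where `f_r(α) = 0` and `f_r(ω) = n ^ r`. -/
def Nvals (n r : ℕ) : Finset ℕ :=
  insert 0 (insert (n ^ r) ((PsiSet r).image (fval n r)))

/-- `N_r(i)`: the `(i+1)`-st smallest element of `{f_r(σ) : σ ∈ Σ_r}`. -/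
def Nseq (n r i : ℕ) : ℕ := ((Nvals n r).sort (· ≤ ·)).getD i 0

/-- The blocker `B(F)`: edges of `[n]^r` meeting every edge of `F`. -/
def blocker (n r : ℕ) (F : Finset (Fin r → Fin n)) : Finset (Fin r → Fin n) :=
  Finset.univ.filter (fun e => ∀ f ∈ F, ∃ i, e i = f i)

/-!
Splitting edges by their first coordinate, `F_{k+1}(∧σ)` and `F_{k+1}(∨σ)` are determined by
`F_k(σ)`, which gives `N_{k+1}(i) = N_k(i)` for `i ≤ 2^k` and
`N_{k+1}(i) = n^k + (n-1) N_k(i - 2^k)` for `i ≥ 2^k`.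

Lower bound: with `σ̄` obtained from `σ` by swapping `∧` and `∨`, every edge of `F_r(σ̄)` meets
every edge of `F_r(σ)`, and `σ` can be chosen with `|F_r(σ)| = N_r(q)`, `|F_r(σ̄)| = N_r(2^r - q)`;
so any `t`-subset of `F_r(σ)` has a blocker containing `F_r(σ̄)`.

Upper bound, by induction on `r`: `(x, e) ∈ B(F)` iff `e ∈ B(F^{≠x})`, where `F^{≠x}` consists of
the tails of the members of `F` with first coordinate different from `x`. Let `F_x` be the
largest slice (tails of the members with first coordinate `x`). Since `F_x ⊆ F^{≠y}` for `y ≠ x`,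
`|B(F)| ≤ |B(F^{≠x})| + (n-1)|B(F_x)|`, while `|F| ≤ n |F_x|` and `|F| ≤ |F_x| + (n-1)|F^{≠x}|`.
The induction hypothesis bounds both blockers through the positions of `|F_x|` and `|F^{≠x}|`
among the `N_r(i)`, and superadditivity-type inequalities for `N_r` turn the result into
`N_{r+1}(2^{r+1} - q)`.
-/

open Finset

lemma pow_succ_eq_add_sub_one_mul {n : ℕ} (hn : 0 < n) (k : ℕ) :
    n ^ (k + 1) = n ^ k + (n - 1) * n ^ k := by
  obtain ⟨c, rfl⟩ := Nat.exists_eq_add_of_lt hn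
  simp only [zero_add, Nat.add_sub_cancel]
  ring

lemma sum_le_add_sub_one_mul {n : ℕ} (f : Fin n → ℕ) (x : Fin n) {c : ℕ}
    (h : ∀ y ≠ x, f y ≤ c) : ∑ y, f y ≤ f x + (n - 1) * c := by
  rw [← add_sum_erase _ _ (mem_univ x)]
  gcongr
  simpa [card_erase_of_mem] using
    sum_le_card_nsmul (univ.erase x) f c fun y hy => h y (ne_of_mem_erase hy)

lemma sum_ite_val_eq_zero {n : ℕ} (hn : 0 < n) (A B : ℕ) :
    ∑ x : Fin n, (if (x : ℕ) = 0 then A else B) = A + (n - 1) * B := by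
  obtain ⟨m, rfl⟩ := Nat.exists_eq_add_of_lt hn
  simp [Fin.sum_univ_succ]

lemma card_filter_fin_succ {α : Type*} [Fintype α] {k : ℕ} (P : (Fin (k + 1) → α) → Prop)
    [DecidablePred P] :
    #(univ.filter P) = ∑ x, #(univ.filter fun e : Fin k → α => P (Fin.cons x e)) := by
  simp only [card_filter]
  rw [← (Fin.consEquiv fun _ => α).sum_comp, Fintype.sum_prod_type]
  rfl

/-- `Nrec n k i` is the paper's `N_k(i)` for `i ≤ 2 ^ k` (see `Nseq_eq`). The recursion reflects
`|F_{k+1}(∧σ)| = |F_k(σ)|` and `|F_{k+1}(∨σ)| = n ^ k + (n - 1) |F_k(σ)|`. -/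
def Nrec (n : ℕ) : ℕ → ℕ → ℕ
  | 0, i => min i 1
  | k + 1, i => if i ≤ 2 ^ k then Nrec n k i else n ^ k + (n - 1) * Nrec n k (i - 2 ^ k)

section Nrec

variable {n k i : ℕ}

@[simp]
lemma Nrec_zero_right : Nrec n k 0 = 0 := by
  induction k with
  | zero => rfl
  | succ k ih => simp [Nrec, ih]

lemma Nrec_succ_of_le_two_pow (h : i ≤ 2 ^ k) : Nrec n (k + 1) i = Nrec n k i := if_pos h

lemma Nrec_succ_of_two_pow_lt (h : 2 ^ k < i) :
    Nrec n (k + 1) i = n ^ k + (n - 1) * Nrec n k (i - 2 ^ k) := if_neg h.not_ge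

lemma Nrec_two_pow (hn : 0 < n) : Nrec n k (2 ^ k) = n ^ k := by
  induction k with
  | zero => rfl
  | succ k ih =>
    rw [Nat.two_pow_succ, Nrec_succ_of_two_pow_lt (by simp), Nat.add_sub_cancel, ih,
      pow_succ_eq_add_sub_one_mul hn]

lemma Nrec_succ_of_two_pow_le (hn : 0 < n) (h : 2 ^ k ≤ i) :
    Nrec n (k + 1) i = n ^ k + (n - 1) * Nrec n k (i - 2 ^ k) := by
  rcases h.eq_or_lt with rfl | h
  · simp [Nrec_succ_of_le_two_pow, Nrec_two_pow hn]
  · exact Nrec_succ_of_two_pow_lt h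

lemma Nrec_mono (hn : 0 < n) : Monotone (Nrec n k) := by
  induction k with
  | zero => exact fun i j hij => min_le_min_right 1 hij
  | succ k ih =>
    refine monotone_nat_of_le_succ fun i => ?_
    rcases lt_trichotomy i (2 ^ k) with h | rfl | h
    · rw [Nrec_succ_of_le_two_pow h.le, Nrec_succ_of_le_two_pow (by omega : i + 1 ≤ 2 ^ k)]
      exact ih i.le_succ
    · rw [Nrec_succ_of_le_two_pow le_rfl, Nrec_succ_of_two_pow_lt (Nat.lt_succ_self _),
        Nrec_two_pow hn]
      exact Nat.le_add_right _ _
    · rw [Nrec_succ_of_two_pow_lt h, Nrec_succ_of_two_pow_lt (by omega), Nat.sub_add_comm h.le]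
      gcongr
      exact ih (Nat.le_succ _)

lemma Nrec_le_pow (hn : 0 < n) (h : i ≤ 2 ^ k) : Nrec n k i ≤ n ^ k :=
  Nrec_two_pow (k := k) hn ▸ Nrec_mono hn h

lemma Nrec_strictMonoOn (hn : 2 ≤ n) : StrictMonoOn (Nrec n k) (Set.Iic (2 ^ k)) := by
  induction k with
  | zero => exact strictMonoOn_Iic_of_lt_succ fun i hi => by simp [Nrec] at hi ⊢; omega
  | succ k ih =>
    refine strictMonoOn_Iic_of_lt_succ fun i hi => ?_
    rw [Order.succ_eq_add_one]
    rcases lt_trichotomy i (2 ^ k) with h | rfl | h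
    · rw [Nrec_succ_of_le_two_pow h.le, Nrec_succ_of_le_two_pow (by omega : i + 1 ≤ 2 ^ k)]
      exact ih (Set.mem_Iic.2 h.le) (Set.mem_Iic.2 (by omega)) (Nat.lt_succ_self i)
    · have h1 : 0 < Nrec n k 1 :=
        Nrec_zero_right (n := n) (k := k) ▸ ih (by simp) (by simp [Nat.one_le_two_pow]) one_pos
      rw [Nrec_succ_of_le_two_pow le_rfl, Nrec_two_pow (by omega),
        Nrec_succ_of_two_pow_lt (by omega : 2 ^ k < 2 ^ k + 1), Nat.add_sub_cancel_left]
      have : 0 < (n - 1) * Nrec n k 1 := Nat.mul_pos (by omega) h1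
      omega
    · have hi' : i + 1 - 2 ^ k ≤ 2 ^ k := by omega
      rw [Nrec_succ_of_two_pow_lt h, Nrec_succ_of_two_pow_lt (by omega)]
      gcongr
      · omega
      · exact ih (Set.mem_Iic.2 (by omega)) (Set.mem_Iic.2 hi') (by omega)

lemma exists_minimal_le_Nrec {m : ℕ} (hn : 0 < n) (h : m ≤ n ^ k) :
    ∃ a ≤ 2 ^ k, m ≤ Nrec n k a ∧ ∀ p < a, Nrec n k p < m := by
  have hex : ∃ a, m ≤ Nrec n k a := ⟨2 ^ k, (Nrec_two_pow hn).symm ▸ h⟩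
  exact ⟨Nat.find hex, Nat.find_le ((Nrec_two_pow hn).symm ▸ h), Nat.find_spec hex,
    fun p hp => not_le.1 (Nat.find_min hex hp)⟩

-- The two inequalities are proved together: each one's inductive step uses the other.
private lemma Nrec_add_le_and_add_le_pow_add (hn : 2 ≤ n) (k : ℕ) :
    (∀ x y, x + y ≤ 2 ^ k → Nrec n k x + Nrec n k y ≤ Nrec n k (x + y)) ∧
    (∀ x y, x ≤ 2 ^ k → y ≤ 2 ^ k → 2 ^ k ≤ x + y →
      Nrec n k x + Nrec n k y ≤ n ^ k + Nrec n k (x + y - 2 ^ k)) := by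
  induction k with
  | zero => constructor <;> intro x y <;> simp [Nrec] <;> omega
  | succ k ih =>
    obtain ⟨ih_add, ih_top⟩ := ih
    have hpow := pow_succ_eq_add_sub_one_mul (by omega : 0 < n) k
    have hc : 1 ≤ n - 1 := by omega
    constructor
    · intro x y h
      wlog hyx : y ≤ x generalizing x y
      · simpa only [add_comm] using this y x (by omega) (by omega)
      rw [Nrec_succ_of_le_two_pow (by omega : y ≤ 2 ^ k)]
      rcases le_or_gt (x + y) (2 ^ k) with hxy | hxy
      · rw [Nrec_succ_of_le_two_pow (by omega), Nrec_succ_of_le_two_pow hxy]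
        exact ih_add x y hxy
      rcases le_or_gt (2 ^ k) x with hx | hx
      · rw [Nrec_succ_of_two_pow_le (by omega) hx, Nrec_succ_of_two_pow_le (by omega) hxy.le,
          show x + y - 2 ^ k = (x - 2 ^ k) + y by omega]
        have := ih_add (x - 2 ^ k) y (by omega)
        nlinarith
      · rw [Nrec_succ_of_le_two_pow hx.le, Nrec_succ_of_two_pow_le (by omega) hxy.le]
        have := ih_top x y hx.le (by omega) hxy.le
        nlinarith
    · intro x y hx hy h
      wlog hyx : y ≤ x generalizing x y
      · simpa only [add_comm] using this y x hy hx (by omega) (by omega)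
      rw [Nrec_succ_of_two_pow_le (by omega) (by omega : 2 ^ k ≤ x), hpow]
      have hx' := Nrec_le_pow (n := n) (by omega) (by omega : x - 2 ^ k ≤ 2 ^ k)
      rcases le_or_gt (2 ^ k) y with hyk | hyk
      · rw [Nrec_succ_of_two_pow_le (by omega) hyk,
          show x + y - 2 ^ (k + 1) = (x - 2 ^ k) + (y - 2 ^ k) by omega]
        rcases le_or_gt ((x - 2 ^ k) + (y - 2 ^ k)) (2 ^ k) with hs | hs
        · rw [Nrec_succ_of_le_two_pow hs]
          have := ih_add (x - 2 ^ k) (y - 2 ^ k) hs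
          have := Nrec_le_pow (n := n) (by omega) hs
          nlinarith
        · rw [Nrec_succ_of_two_pow_le (by omega) hs.le]
          have := ih_top (x - 2 ^ k) (y - 2 ^ k) (by omega) (by omega) hs.le
          nlinarith
      · rw [Nrec_succ_of_le_two_pow hyk.le, Nrec_succ_of_le_two_pow (by omega),
          show x + y - 2 ^ (k + 1) = (x - 2 ^ k) + y - 2 ^ k by omega]
        have := ih_top (x - 2 ^ k) y (by omega) hyk.le (by omega)
        nlinarith

lemma Nrec_add_le (hn : 2 ≤ n) {x y : ℕ} (h : x + y ≤ 2 ^ k) :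
    Nrec n k x + Nrec n k y ≤ Nrec n k (x + y) :=
  (Nrec_add_le_and_add_le_pow_add hn k).1 x y h

lemma Nrec_add_le_pow_add (hn : 2 ≤ n) {x y : ℕ} (hx : x ≤ 2 ^ k) (hy : y ≤ 2 ^ k)
    (h : 2 ^ k ≤ x + y) : Nrec n k x + Nrec n k y ≤ n ^ k + Nrec n k (x + y - 2 ^ k) :=
  (Nrec_add_le_and_add_le_pow_add hn k).2 x y hx hy h

lemma Nrec_add_sub_one_mul_le (hn : 2 ≤ n) {a b : ℕ} (hba : b ≤ a) (ha : a ≤ 2 ^ k) :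
    Nrec n k a + (n - 1) * Nrec n k b ≤ Nrec n (k + 1) (a + b) := by
  induction k generalizing a b with
  | zero =>
    rw [pow_zero] at ha
    interval_cases a <;> interval_cases b <;> simp [Nrec]
  | succ k ih =>
    have hpow := pow_succ_eq_add_sub_one_mul (by omega : 0 < n) k
    rcases le_or_gt a (2 ^ k) with hak | hak
    · rw [Nrec_succ_of_le_two_pow hak, Nrec_succ_of_le_two_pow (by omega : b ≤ 2 ^ k),
        Nrec_succ_of_le_two_pow (by omega : a + b ≤ 2 ^ (k + 1))]
      exact ih hba hak
    rw [Nrec_succ_of_two_pow_lt hak]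
    rcases le_or_gt (2 ^ k) b with hbk | hbk
    · rw [Nrec_succ_of_two_pow_le (by omega) hbk, Nrec_succ_of_two_pow_le (by omega) (by omega),
        show a + b - 2 ^ (k + 1) = (a - 2 ^ k) + (b - 2 ^ k) by omega]
      have := ih (by omega : b - 2 ^ k ≤ a - 2 ^ k) (by omega)
      nlinarith
    rw [Nrec_succ_of_le_two_pow hbk.le]
    rcases le_or_gt ((a - 2 ^ k) + b) (2 ^ k) with hs | hs
    · rw [Nrec_succ_of_le_two_pow (by omega : a + b ≤ 2 ^ (k + 1)),
        Nrec_succ_of_two_pow_le (by omega) (by omega),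
        show a + b - 2 ^ k = (a - 2 ^ k) + b by omega]
      have := Nrec_add_le hn hs
      nlinarith
    · rw [Nrec_succ_of_two_pow_le (by omega) (by omega : 2 ^ (k + 1) ≤ a + b),
        show a + b - 2 ^ (k + 1) = (a - 2 ^ k) + b - 2 ^ k by omega,
        Nrec_succ_of_le_two_pow (by omega : (a - 2 ^ k) + b - 2 ^ k ≤ 2 ^ k)]
      have := Nrec_add_le_pow_add hn (by omega : a - 2 ^ k ≤ 2 ^ k) hbk.le hs.le
      nlinarith

lemma Nrec_two_pow_sub_add_sub_one_mul_le (hn : 2 ≤ n) {a b q : ℕ} (ha : a ≤ 2 ^ k)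
    (hb : b ≤ 2 ^ k) (hna : ∀ p < q, Nrec n (k + 1) p < n * Nrec n k a)
    (hab : ∀ p < q, Nrec n (k + 1) p < Nrec n k a + (n - 1) * Nrec n k b) :
    Nrec n k (2 ^ k - b) + (n - 1) * Nrec n k (2 ^ k - a) ≤
      Nrec n (k + 1) (2 ^ (k + 1) - q) := by
  have key : ∀ u v, u ≤ v → v ≤ 2 ^ k → q ≤ u + v →
      Nrec n k (2 ^ k - u) + (n - 1) * Nrec n k (2 ^ k - v) ≤
        Nrec n (k + 1) (2 ^ (k + 1) - q) := fun u v huv hv hq =>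
    (Nrec_add_sub_one_mul_le hn (by omega) (by omega)).trans
      (Nrec_mono (by omega) (by omega))
  rcases le_total b a with hba | hab_le
  · have hq : q ≤ a + b :=
      not_lt.1 fun hq => (hab _ hq).not_ge (Nrec_add_sub_one_mul_le hn hba ha)
    exact key b a hba ha (by omega)
  · have hq : q ≤ a + a := not_lt.1 fun hq => (hna _ hq).not_ge <| by
      have := Nrec_add_sub_one_mul_le hn le_rfl ha
      zify [(by omega : 1 ≤ n)] at this ⊢
      linarith
    have := key a a le_rfl ha hq
    have := Nrec_mono (n := n) (k := k) (by omega) (by omega : 2 ^ k - b ≤ 2 ^ k - a)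
    omega

end Nrec

section Slices

variable {α : Type*} [DecidableEq α] {k : ℕ}

def slice (F : Finset (Fin (k + 1) → α)) (x : α) : Finset (Fin k → α) :=
  (F.filter (· 0 = x)).image Fin.tail

def sliceNe (F : Finset (Fin (k + 1) → α)) (x : α) : Finset (Fin k → α) :=
  (F.filter (· 0 ≠ x)).image Fin.tail

lemma card_slice (F : Finset (Fin (k + 1) → α)) (x : α) :
    #(slice F x) = #(F.filter (· 0 = x)) := by
  refine card_image_of_injOn fun f hf g hg h => ?_
  simp only [coe_filter, Set.mem_ofPred_eq] at hf hg
  rw [← Fin.cons_self_tail f, ← Fin.cons_self_tail g, hf.2, hg.2]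
  exact congrArg _ h

lemma card_eq_sum_card_slice [Fintype α] (F : Finset (Fin (k + 1) → α)) :
    #F = ∑ x, #(slice F x) := by
  simp only [card_slice]
  exact card_eq_sum_card_fiberwise fun f _ => mem_univ (f 0)

lemma slice_subset_sliceNe (F : Finset (Fin (k + 1) → α)) {x y : α} (h : x ≠ y) :
    slice F x ⊆ sliceNe F y :=
  image_subset_image fun f hf => by
    simp only [mem_filter] at hf ⊢
    exact ⟨hf.1, hf.2 ▸ h⟩

end Slices

section Blocker

variable {n k : ℕ}

lemma blocker_anti {F G : Finset (Fin k → Fin n)} (h : F ⊆ G) :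
    blocker n k G ⊆ blocker n k F :=
  monotone_filter_right _ fun _ _ he f hf => he f (h hf)

lemma cons_mem_blocker_iff (F : Finset (Fin (k + 1) → Fin n)) (x : Fin n) (e : Fin k → Fin n) :
    Fin.cons x e ∈ blocker n (k + 1) F ↔ e ∈ blocker n k (sliceNe F x) := by
  simp only [blocker, sliceNe, mem_filter, mem_univ, true_and, forall_mem_image,
    Fin.exists_fin_succ, Fin.cons_zero, Fin.cons_succ, Fin.tail]
  refine ⟨fun h f hf => (h f hf.1).resolve_left (Ne.symm hf.2), fun h f hf => ?_⟩
  by_cases hx : f 0 = x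
  · exact .inl hx.symm
  · exact .inr (h ⟨hf, hx⟩)

lemma card_blocker_succ (F : Finset (Fin (k + 1) → Fin n)) :
    #(blocker n (k + 1) F) = ∑ x, #(blocker n k (sliceNe F x)) := by
  rw [blocker, card_filter_fin_succ]
  congr! 2 with x
  ext e
  simpa [blocker] using cons_mem_blocker_iff F x e

lemma card_le_card_slice_add (F : Finset (Fin (k + 1) → Fin n)) (x : Fin n) :
    #F ≤ #(slice F x) + (n - 1) * #(sliceNe F x) := by
  rw [card_eq_sum_card_slice]
  exact sum_le_add_sub_one_mul _ x fun y hy => card_le_card (slice_subset_sliceNe F hy)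

lemma card_blocker_le_card_blocker_slice_add (F : Finset (Fin (k + 1) → Fin n)) (x : Fin n) :
    #(blocker n (k + 1) F)
      ≤ #(blocker n k (sliceNe F x)) + (n - 1) * #(blocker n k (slice F x)) := by
  rw [card_blocker_succ]
  exact sum_le_add_sub_one_mul _ x fun y hy =>
    card_le_card (blocker_anti (slice_subset_sliceNe F hy.symm))

lemma card_blocker_le {q : ℕ} (hn : 2 ≤ n) (F : Finset (Fin k → Fin n))
    (hF : ∀ p < q, Nrec n k p < #F) : #(blocker n k F) ≤ Nrec n k (2 ^ k - q) := by
  induction k generalizing q with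
  | zero =>
    rcases q.eq_zero_or_pos with rfl | hq
    · simpa [Nrec] using card_le_univ (blocker n 0 F)
    · obtain ⟨f, hf⟩ := card_pos.1 (by simpa using hF 0 hq)
      have : blocker n 0 F = ∅ :=
        filter_eq_empty_iff.2 fun e _ he => (he f hf).elim fun i _ => i.elim0
      simp [this]
  | succ k ih =>
    have hcard (G : Finset (Fin k → Fin n)) : #G ≤ n ^ k := by
      simpa using card_le_univ G
    obtain ⟨x, -, hx⟩ :=
      exists_max_image univ (fun x => #(slice F x)) ⟨⟨0, by omega⟩, mem_univ _⟩
    obtain ⟨a, ha, hsa, hFa⟩ := exists_minimal_le_Nrec (by omega) (hcard (slice F x))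
    obtain ⟨b, hb, hsb, hFb⟩ := exists_minimal_le_Nrec (by omega) (hcard (sliceNe F x))
    have hna : #F ≤ n * Nrec n k a := calc
      #F ≤ n * #(slice F x) := by
        simpa [card_eq_sum_card_slice F] using
          sum_le_card_nsmul univ _ _ fun y _ => hx y (mem_univ y)
      _ ≤ n * Nrec n k a := Nat.mul_le_mul_left n hsa
    have hab : #F ≤ Nrec n k a + (n - 1) * Nrec n k b :=
      (card_le_card_slice_add F x).trans (by gcongr)
    calc #(blocker n (k + 1) F)
        ≤ #(blocker n k (sliceNe F x)) + (n - 1) * #(blocker n k (slice F x)) :=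
          card_blocker_le_card_blocker_slice_add F x
      _ ≤ Nrec n k (2 ^ k - b) + (n - 1) * Nrec n k (2 ^ k - a) := by
          gcongr
          exacts [ih _ hFb, ih _ hFa]
      _ ≤ Nrec n (k + 1) (2 ^ (k + 1) - q) :=
          Nrec_two_pow_sub_add_sub_one_mul_le hn ha hb (fun p hp => (hF p hp).trans_le hna)
            (fun p hp => (hF p hp).trans_le hab)

end Blocker

section EdgeCond

variable {n r : ℕ}

lemma vcond_cons_zero (x : Fin n) (e : Fin r → Fin n) :
    vcond (Fin.cons x e : Fin (r + 1) → Fin n) 0 = decide ((x : ℕ) = 0) := by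
  simp [vcond]

lemma vcond_cons_succ (x : Fin n) (e : Fin r → Fin n) (j : ℕ) :
    vcond (Fin.cons x e : Fin (r + 1) → Fin n) (j + 1) = vcond e j := by
  by_cases hj : j < r
  · rw [vcond, vcond, dif_pos (by omega), dif_pos hj]
    rfl
  · rw [vcond, vcond, dif_neg (by omega), dif_neg hj]

lemma edgeCond_cons_succ (x : Fin n) (e : Fin r → Fin n) (σ : List Bool) (j : ℕ) :
    edgeCond (Fin.cons x e : Fin (r + 1) → Fin n) (j + 1) σ = edgeCond e j σ := by
  induction σ generalizing j with
  | nil => exact vcond_cons_succ x e j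
  | cons b σ ih => cases b <;> simp [edgeCond, vcond_cons_succ, ih]

lemma fval_succ (σ : List Bool) :
    fval n (r + 1) σ =
      ∑ x, #(univ.filter fun e : Fin r → Fin n => edgeCond (Fin.cons x e) 0 σ) :=
  card_filter_fin_succ _

lemma fval_succ_nil (hn : 0 < n) : fval n (r + 1) [] = n ^ r := by
  rw [fval_succ, ← add_zero (n ^ r), ← mul_zero (n - 1), ← sum_ite_val_eq_zero hn]
  congr! 1 with x
  split_ifs with hx <;> simp [edgeCond, vcond_cons_zero, hx]

lemma fval_succ_cons_false (hn : 0 < n) (σ : List Bool) :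
    fval n (r + 1) (false :: σ) = fval n r σ := by
  rw [fval_succ, ← add_zero (fval n r σ), ← mul_zero (n - 1), ← sum_ite_val_eq_zero hn]
  congr! 1 with x
  split_ifs with hx <;> simp [edgeCond, vcond_cons_zero, edgeCond_cons_succ, hx, fval, Fset]

lemma fval_succ_cons_true (hn : 0 < n) (σ : List Bool) :
    fval n (r + 1) (true :: σ) = n ^ r + (n - 1) * fval n r σ := by
  rw [fval_succ, ← sum_ite_val_eq_zero hn]
  congr! 1 with x
  split_ifs with hx <;> simp [edgeCond, vcond_cons_zero, edgeCond_cons_succ, hx, fval, Fset]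

end EdgeCond

section Construction

variable {n r : ℕ}

lemma exists_eq_of_vcond {e e' : Fin r → Fin n} {j : ℕ} (he : vcond e j) (he' : vcond e' j) :
    ∃ i, e i = e' i := by
  unfold vcond at he he'
  split_ifs at he he' with hj
  exact ⟨⟨j, hj⟩, Fin.ext (by simp_all)⟩

lemma exists_eq_of_edgeCond_map_not {e e' : Fin r → Fin n} (σ : List Bool) (j : ℕ)
    (he : edgeCond e j σ) (he' : edgeCond e' j (σ.map not)) : ∃ i, e i = e' i := by
  induction σ generalizing j with
  | nil => exact exists_eq_of_vcond he he'
  | cons b σ ih =>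
    cases b <;> simp only [edgeCond, List.map_cons, Bool.not_false, Bool.not_true,
      Bool.and_eq_true, Bool.or_eq_true] at he he'
    · exact he'.elim (exists_eq_of_vcond he.1) (ih _ he.2)
    · exact he.elim (fun h => exists_eq_of_vcond h he'.1) (fun h => ih _ h he'.2)

lemma Fset_map_not_subset_blocker (σ : List Bool) :
    Fset n r (σ.map not) ⊆ blocker n r (Fset n r σ) := by
  intro e he
  simp only [Fset, blocker, mem_filter, mem_univ, true_and] at he ⊢
  exact fun f hf => (exists_eq_of_edgeCond_map_not σ 0 hf he).imp fun _ => Eq.symm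

lemma exists_fval_eq_Nrec (hn : 0 < n) {q : ℕ} (hq0 : 0 < q) (hq : q < 2 ^ r) :
    ∃ σ, fval n r σ = Nrec n r q ∧ fval n r (σ.map not) = Nrec n r (2 ^ r - q) := by
  induction r generalizing q with
  | zero => omega
  | succ r ih =>
    rcases lt_trichotomy q (2 ^ r) with hlt | rfl | hgt
    · obtain ⟨σ, hσ, hσ'⟩ := ih hq0 hlt
      refine ⟨false :: σ, ?_, ?_⟩
      · rw [fval_succ_cons_false hn, hσ, Nrec_succ_of_le_two_pow hlt.le]
      · rw [List.map_cons, Bool.not_false, fval_succ_cons_true hn, hσ',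
          Nrec_succ_of_two_pow_lt (by omega), show 2 ^ (r + 1) - q - 2 ^ r = 2 ^ r - q by omega]
    · refine ⟨[], ?_, ?_⟩ <;>
        simp [fval_succ_nil hn, Nrec_succ_of_le_two_pow, Nrec_two_pow hn, Nat.two_pow_succ]
    · obtain ⟨σ, hσ, hσ'⟩ := ih (by omega : 0 < q - 2 ^ r) (by omega)
      refine ⟨true :: σ, ?_, ?_⟩
      · rw [fval_succ_cons_true hn, hσ, Nrec_succ_of_two_pow_lt hgt]
      · rw [List.map_cons, Bool.not_true, fval_succ_cons_false hn, hσ',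
          Nrec_succ_of_le_two_pow (by omega), show 2 ^ r - (q - 2 ^ r) = 2 ^ (r + 1) - q by omega]

lemma exists_card_eq_Nrec_le_card_blocker (hn : 0 < n) {q : ℕ} (hq : q ≤ 2 ^ r) :
    ∃ A : Finset (Fin r → Fin n),
      #A = Nrec n r q ∧ Nrec n r (2 ^ r - q) ≤ #(blocker n r A) := by
  rcases q.eq_zero_or_pos with rfl | hq0
  · exact ⟨∅, by simp, by simp [blocker, Nrec_two_pow hn]⟩
  rcases hq.eq_or_lt with rfl | hq
  · exact ⟨univ, by simp [Nrec_two_pow hn], by simp⟩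
  obtain ⟨σ, hσ, hσ'⟩ := exists_fval_eq_Nrec hn hq0 hq
  exact ⟨Fset n r σ, hσ, hσ' ▸ card_le_card (Fset_map_not_subset_blocker σ)⟩

end Construction

section Nvals

variable {n r : ℕ}

lemma mem_PsiSet {σ : List Bool} : σ ∈ PsiSet r ↔ σ.length < r := by
  simp only [PsiSet, mem_biUnion, mem_range, mem_image, mem_univ, true_and]
  refine ⟨fun ⟨m, hm, g, hg⟩ => hg ▸ (List.length_ofFn (f := g)).symm ▸ hm,
    fun h => ⟨σ.length, h, σ.get, List.ofFn_get σ⟩⟩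

lemma Nvals_succ (hn : 0 < n) :
    Nvals n (r + 1) = Nvals n r ∪ (Nvals n r).image (fun v => n ^ r + (n - 1) * v) := by
  ext v
  simp only [Nvals, mem_insert, mem_union, mem_image, mem_PsiSet]
  constructor
  · rintro (rfl | rfl | ⟨σ, hσ, rfl⟩)
    · exact .inl (.inl rfl)
    · exact .inr ⟨n ^ r, .inr (.inl rfl), (pow_succ_eq_add_sub_one_mul hn r).symm⟩
    · rcases σ with _ | ⟨_ | _, s⟩
      · exact .inl (.inr (.inl (fval_succ_nil hn)))
      · exact .inl (.inr (.inr ⟨s, by simpa using hσ, (fval_succ_cons_false hn s).symm⟩))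
      · exact .inr
          ⟨_, .inr (.inr ⟨s, by simpa using hσ, rfl⟩), (fval_succ_cons_true hn s).symm⟩
  · rintro ((rfl | rfl | ⟨s, hs, rfl⟩) | ⟨w, (rfl | rfl | ⟨s, hs, rfl⟩), rfl⟩)
    · exact .inl rfl
    · exact .inr (.inr ⟨[], by simp, fval_succ_nil hn⟩)
    · exact .inr (.inr ⟨false :: s, by simpa using hs, fval_succ_cons_false hn s⟩)
    · exact .inr (.inr ⟨[], by simp, by simp [fval_succ_nil hn]⟩)
    · exact .inr (.inl (pow_succ_eq_add_sub_one_mul hn r).symm)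
    · exact .inr (.inr ⟨true :: s, by simpa using hs, fval_succ_cons_true hn s⟩)

lemma image_Nrec_succ (hn : 0 < n) :
    (range (2 ^ (r + 1) + 1)).image (Nrec n (r + 1)) =
      (range (2 ^ r + 1)).image (Nrec n r) ∪
        ((range (2 ^ r + 1)).image (Nrec n r)).image (fun v => n ^ r + (n - 1) * v) := by
  ext v
  simp only [mem_union, mem_image, mem_range]
  constructor
  · rintro ⟨i, hi, rfl⟩
    rcases le_or_gt i (2 ^ r) with h | h
    · exact .inl ⟨i, by omega, (Nrec_succ_of_le_two_pow h).symm⟩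
    · exact .inr ⟨_, ⟨i - 2 ^ r, by omega, rfl⟩, (Nrec_succ_of_two_pow_lt h).symm⟩
  · rintro (⟨i, hi, rfl⟩ | ⟨_, ⟨j, hj, rfl⟩, rfl⟩)
    · exact ⟨i, by omega, Nrec_succ_of_le_two_pow (by omega)⟩
    · refine ⟨2 ^ r + j, by omega, ?_⟩
      rw [Nrec_succ_of_two_pow_le hn (Nat.le_add_right _ _), Nat.add_sub_cancel_left]

lemma Nvals_eq_image_Nrec (hn : 0 < n) : Nvals n r = (range (2 ^ r + 1)).image (Nrec n r) := by
  induction r with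
  | zero => rfl
  | succ r ih => rw [Nvals_succ hn, ih, image_Nrec_succ hn]

lemma sort_Nvals (hn : 2 ≤ n) :
    (Nvals n r).sort (· ≤ ·) = (List.range (2 ^ r + 1)).map (Nrec n r) := by
  have hlt : ((List.range (2 ^ r + 1)).map (Nrec n r)).Pairwise (· < ·) :=
    List.pairwise_map.2 <| List.pairwise_lt_range.imp_of_mem fun ha hb hab =>
      Nrec_strictMonoOn hn (Set.mem_Iic.2 (by simp at ha; omega))
        (Set.mem_Iic.2 (by simp at hb; omega)) hab
  have : Nvals n r = ((List.range (2 ^ r + 1)).map (Nrec n r)).toFinset := by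
    rw [Nvals_eq_image_Nrec (by omega)]; ext; simp
  rw [this]
  exact (List.toFinset_sort _ hlt.nodup).2 (hlt.imp le_of_lt)

lemma Nseq_eq (hn : 2 ≤ n) (i : ℕ) : Nseq n r i = if i ≤ 2 ^ r then Nrec n r i else 0 := by
  rw [Nseq, sort_Nvals hn, List.getD_eq_getElem?_getD]
  split_ifs with hi
  · simp [List.getElem?_range (Nat.lt_succ_of_le hi)]
  · simp [hi]

end Nvals

theorem stmt9_general (n r t q : ℕ) (hn : 2 ≤ n)
    (hq1 : Nseq n r (q - 1) < t) (hq2 : t ≤ Nseq n r q) :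
    IsGreatest {m : ℕ | ∃ F : Finset (Fin r → Fin n),
      F.card = t ∧ (blocker n r F).card = m} (Nseq n r (2 ^ r - q)) := by
  have hq : q ≤ 2 ^ r := by
    by_contra h
    simp [Nseq_eq hn, h] at hq2
    omega
  simp only [Nseq_eq hn, hq, Nat.sub_le, (Nat.sub_le q 1).trans hq, if_true] at hq1 hq2 ⊢
  have hF (F : Finset (Fin r → Fin n)) (hFt : #F = t) : ∀ p < q, Nrec n r p < #F :=
    fun p hp => hFt ▸ (Nrec_mono (by omega) (Nat.le_sub_one_of_lt hp)).trans_lt hq1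
  refine ⟨?_, fun m ⟨F, hFt, hm⟩ => hm ▸ card_blocker_le hn F (hF F hFt)⟩
  obtain ⟨A, hA, hBA⟩ := exists_card_eq_Nrec_le_card_blocker (n := n) (by omega) hq
  obtain ⟨F, hFA, hFt⟩ := exists_subset_card_eq (hA ▸ hq2)
  exact ⟨F, hFt, le_antisymm (card_blocker_le hn F (hF F hFt))
    (hBA.trans (card_le_card (blocker_anti hFA)))⟩

/-- `b(t) = N_r(2^r − N*(t))`: among all `F ⊆ [n]^r` with `|F| = t`, the maximal
size of the blocker `B(F)` is `N_r(2^r − q)`, where `q = N*(t)` is the unique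
number with `N_r(q−1) < t ≤ N_r(q)`. -/
theorem stmt9 (n r t q : ℕ) (hn : 2 ≤ n) (hr : 1 ≤ r) (ht1 : 1 ≤ t) (ht2 : t ≤ n ^ r)
    (hq1 : Nseq n r (q - 1) < t) (hq2 : t ≤ Nseq n r q) :
    IsGreatest {m : ℕ | ∃ F : Finset (Fin r → Fin n),
      F.card = t ∧ (blocker n r F).card = m} (Nseq n r (2 ^ r - q)) :=
  stmt9_general n r t q hn hq1 hq2
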